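/- Let v_i = v_i^r + j·v_i^i and v_j = v_j^r + j·v_j^i be complex voltages, let y = g + jb and Y = G + jB be admittances with real g, b, G, B, and define the W-model variables W^d_i = (v_i^r)² + (v_i^i)², W^d_j = (v_j^r)² + (v_j^i)², W^r_{ij} = v_i^r·v_j^r + v_i^i·v_j^i, W^i_{ij} = v_i^r·v_j^i − v_i^i·v_j^r. Then the squared branch current magnitude satisfies |y·v_i + Y·v_j|² = 2·(g·G + b·B)·W^r_{ij} + 2·(b·G − g·B)·W^i_{ij} + |y|²·W^d_i + |Y|²·W^d_j. Consequently the current thermal limit |y·v_i + Y·v_j| ≤ I^{Max} is equivalent to the linear-in-W inequality 2·(g·G + b·B)·W^r_{ij} + 2·(b·G − g·B)·W^i_{ij} + |y|²·W^d_i + |Y|²·W^d_j ≤ (I^{Max})². (W-model statement of the current thermal limit in the nodal injection formulation NIRAW.) -/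

import Mathlib

/-!
Expanding `|y v + Y w|² = |y|²|v|² + |Y|²|w|² + 2 Re (y v · conj (Y w))` and regrouping the cross
term as `Re ((y · conj Y) · (v · conj w))` separates admittances from voltages: in coordinates
`y · conj Y = (gG + bB) + (bG − gB) i` and `v_i · conj v_j = W^r − W^i i`, so the squared current is
linear in the W-variables. The thermal limit is then its square, both sides being nonnegative.
-/

open ComplexConjugate

namespace Complex

theorem sq_norm_mul_add_mul (y Y v w : ℂ) :
    ‖y * v + Y * w‖ ^ 2
      = 2 * (y * conj Y * (v * conj w)).re + ‖y‖ ^ 2 * ‖v‖ ^ 2 + ‖Y‖ ^ 2 * ‖w‖ ^ 2 := by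
  have hcross : y * conj Y * (v * conj w) = y * v * conj (Y * w) := by
    rw [map_mul]; ring
  rw [hcross, Complex.sq_norm, normSq_add, normSq_mul, normSq_mul]
  simp only [← Complex.sq_norm]
  ring

theorem re_mul_conj_mul_mul_conj (g b G B vr vi wr wi : ℝ) :
    ((g + b * I) * conj (G + B * I) * ((vr + vi * I) * conj (wr + wi * I))).re
      = (g * G + b * B) * (vr * wr + vi * wi) + (b * G - g * B) * (vr * wi - vi * wr) := by
  simp only [map_add, map_mul, conj_ofReal, conj_I, mul_re, mul_im, add_re, add_im,
    ofReal_re, ofReal_im, I_re, I_im, neg_re, neg_im]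
  ring

end Complex

/-- W-model statement of the current thermal limit in the nodal injection
formulation NIRAW. -/
theorem current_thermal_limit_W_model
    (vir vii vjr vji g b G B : ℝ)
    (vi vj y Y : ℂ)
    (hvi : vi = (vir : ℂ) + (vii : ℂ) * Complex.I)
    (hvj : vj = (vjr : ℂ) + (vji : ℂ) * Complex.I)
    (hy : y = (g : ℂ) + (b : ℂ) * Complex.I)
    (hY : Y = (G : ℂ) + (B : ℂ) * Complex.I)
    (Wdi Wdj Wr Wi : ℝ)
    (hWdi : Wdi = vir ^ 2 + vii ^ 2)
    (hWdj : Wdj = vjr ^ 2 + vji ^ 2)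
    (hWr : Wr = vir * vjr + vii * vji)
    (hWi : Wi = vir * vji - vii * vjr)
    (IMax : ℝ) (hIMax : 0 < IMax) :
    ‖y * vi + Y * vj‖ ^ 2
      = 2 * (g * G + b * B) * Wr + 2 * (b * G - g * B) * Wi
        + ‖y‖ ^ 2 * Wdi + ‖Y‖ ^ 2 * Wdj ∧
    (‖y * vi + Y * vj‖ ≤ IMax ↔
      2 * (g * G + b * B) * Wr + 2 * (b * G - g * B) * Wi
        + ‖y‖ ^ 2 * Wdi + ‖Y‖ ^ 2 * Wdj
        ≤ IMax ^ 2) := by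
  have hW : ‖y * vi + Y * vj‖ ^ 2
      = 2 * (g * G + b * B) * Wr + 2 * (b * G - g * B) * Wi
        + ‖y‖ ^ 2 * Wdi + ‖Y‖ ^ 2 * Wdj := by
    rw [Complex.sq_norm_mul_add_mul, hy, hY, hvi, hvj, Complex.re_mul_conj_mul_mul_conj,
      Complex.sq_norm (vir + vii * Complex.I), Complex.sq_norm (vjr + vji * Complex.I),
      Complex.normSq_add_mul_I, Complex.normSq_add_mul_I, hWdi, hWdj, hWr, hWi]
    ring
  refine ⟨hW, ?_⟩
  rw [← hW, sq_le_sq₀ (norm_nonneg _) hIMax.le]
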